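/- Let p = 2^k·t + 1 be an odd prime with k ≥ 3 an integer and t an odd integer greater than 1, let r be a primitive root modulo p, and set B = ⋃_{j=0}^{2^{k−1}−1} C_j^p. If 2 ∈ C_{2^{k−1}}^p, then both T_2 = {{x, 2x} : x ∈ B} and T_{2^{−1}} = {{x, 2^{−1}x} : x ∈ B} are strong Skolem starters for ℤ_p. -/

import Mathlib

/-- The sum of the two entries of an unordered pair. -/
def pairSum {n : ℕ} : Sym2 (ZMod n) → ZMod n :=
  Sym2.lift ⟨fun x y => x + y, fun x y => add_comm x y⟩

/-- `S` is a starter for `ℤ_n`: a set of unordered pairs of distinct nonzero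
elements such that every nonzero element lies in exactly one pair, and for every
nonzero `a` there is exactly one pair whose (signed) difference is `a`. -/
def IsStarter (n : ℕ) (S : Set (Sym2 (ZMod n))) : Prop :=
  (∀ z ∈ S, ¬ z.IsDiag) ∧
  (∀ z ∈ S, (0 : ZMod n) ∉ z) ∧
  (∀ a : ZMod n, a ≠ 0 → ∃! z, z ∈ S ∧ a ∈ z) ∧
  (∀ a : ZMod n, a ≠ 0 → ∃! z, z ∈ S ∧ ∃ x y : ZMod n, z = s(x, y) ∧ x - y = a)

/-- A starter is strong if the pair sums are nonzero and pairwise distinct. -/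
def IsStrongStarter (n : ℕ) (S : Set (Sym2 (ZMod n))) : Prop :=
  IsStarter n S ∧ (∀ z ∈ S, pairSum z ≠ 0) ∧
    ∀ z ∈ S, ∀ w ∈ S, pairSum z = pairSum w → z = w

/-- A starter is Skolem if, identifying `ℤ_n ∖ {0}` with `1, …, n-1` via `ZMod.val`,
for every `i = 1, …, (n-1)/2` some pair `{x, y}` with `y > x` satisfies `y - x ≡ i (mod n)`. -/
def IsSkolemStarter (n : ℕ) (S : Set (Sym2 (ZMod n))) : Prop :=
  IsStarter n S ∧ ∀ i : ℕ, 1 ≤ i → i ≤ (n - 1) / 2 →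
    ∃ z ∈ S, ∃ x y : ZMod n, z = s(x, y) ∧ x.val < y.val ∧ y - x = (i : ZMod n)

/-- A strong Skolem starter is a starter that is both strong and Skolem. -/
def IsStrongSkolemStarter (n : ℕ) (S : Set (Sym2 (ZMod n))) : Prop :=
  IsStrongStarter n S ∧ IsSkolemStarter n S

/-- The cyclotomic class `C_j = r^j · ⟨r^Δ⟩` inside `ℤ_m`, as a set of residues. -/
def cycClass (m : ℕ) (r : ℤ) (Δ j : ℕ) : Set (ZMod m) :=
  {y | ∃ e : ℕ, y = (r : ZMod m) ^ j * ((r : ZMod m) ^ Δ) ^ e}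

lemma pairSum_mk {n : ℕ} (x y : ZMod n) : pairSum s(x, y) = x + y := rfl

lemma main_starter (p : ℕ) [hpF : Fact p.Prime] (hp5 : 5 ≤ p) (A : Set (ZMod p))
    (hA0 : (0 : ZMod p) ∉ A)
    (hflip2 : ∀ x : ZMod p, x ≠ 0 → ((2 * x ∈ A) ↔ x ∉ A))
    (hflipneg : ∀ x : ZMod p, x ≠ 0 → ((-x ∈ A) ↔ x ∉ A)) :
    IsStrongSkolemStarter p {z | ∃ x ∈ A, z = s(x, 2 * x)} := by
  have hodd : Odd p := hpF.out.odd_of_ne_two (by omega)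
  have h2ne : (2 : ZMod p) ≠ 0 := by
    have := (ZMod.natCast_eq_zero_iff 2 p).not.mpr
      (fun h => by have := Nat.le_of_dvd (by norm_num) h; omega)
    simpa using this
  have h3ne : (3 : ZMod p) ≠ 0 := by
    have := (ZMod.natCast_eq_zero_iff 3 p).not.mpr
      (fun h => by have := Nat.le_of_dvd (by norm_num) h; omega)
    simpa using this
  have hAne : ∀ x ∈ A, x ≠ 0 := fun x hx h => hA0 (h ▸ hx)
  -- a ∉ A and a ≠ 0 implies 2⁻¹ a ∈ A
  have hhalf : ∀ a : ZMod p, a ≠ 0 → a ∉ A → (2⁻¹ * a ∈ A ∧ 2 * (2⁻¹ * a) = a) := by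
    intro a ha hna
    have hinv : (2 : ZMod p) * (2⁻¹ * a) = a := by
      field_simp
    have h' : 2⁻¹ * a ≠ 0 := by
      intro h; rw [h, mul_zero] at hinv; exact ha hinv.symm
    refine ⟨?_, hinv⟩
    by_contra hc
    exact hna (hinv ▸ (hflip2 _ h').mpr hc)
  have h2A : ∀ x ∈ A, 2 * x ∉ A := fun x hx =>
    fun h => ((hflip2 x (hAne x hx)).mp h) hx
  have hnegA : ∀ x ∈ A, -x ∉ A := fun x hx =>
    fun h => ((hflipneg x (hAne x hx)).mp h) hx
  have hstarter : IsStarter p {z | ∃ x ∈ A, z = s(x, 2 * x)} := by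
    refine ⟨?_, ?_, ?_, ?_⟩
    · rintro z ⟨x, hx, rfl⟩
      rw [Sym2.mk_isDiag_iff]
      intro h
      exact hAne x hx (by linear_combination -h)
    · rintro z ⟨x, hx, rfl⟩
      rw [Sym2.mem_iff]
      push_neg
      exact ⟨fun h => hAne x hx h.symm, fun h => by
        rcases mul_eq_zero.mp h.symm with h | h
        exacts [h2ne h, hAne x hx h]⟩
    · intro a ha
      by_cases hmem : a ∈ A
      · refine ⟨s(a, 2 * a), ⟨⟨a, hmem, rfl⟩, by simp⟩, ?_⟩
        rintro z ⟨⟨x, hx, rfl⟩, hmz⟩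
        rw [Sym2.mem_iff] at hmz
        rcases hmz with rfl | rfl
        · rfl
        · exact absurd hmem (h2A x hx)
      · obtain ⟨hha, hinv⟩ := hhalf a ha hmem
        refine ⟨s(2⁻¹ * a, a), ⟨⟨2⁻¹ * a, hha, by rw [hinv]⟩, by simp⟩, ?_⟩
        rintro z ⟨⟨x, hx, rfl⟩, hmz⟩
        rw [Sym2.mem_iff] at hmz
        rcases hmz with rfl | hax
        · exact absurd hx hmem
        · have : x = 2⁻¹ * a := by
            rw [hax]; field_simp
          rw [this, hinv]
    · intro a ha
      -- the pair with difference a : if a ∈ A pair s(a,2a) (diff 2a - a = a), else pair s(-a, -2a)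
      by_cases hmem : a ∈ A
      · refine ⟨s(a, 2 * a), ⟨⟨a, hmem, rfl⟩, 2 * a, a, Sym2.eq_swap, by ring⟩, ?_⟩
        rintro z ⟨⟨x, hx, rfl⟩, u, v, huv, hd⟩
        rw [Sym2.eq_iff] at huv
        have : a = x ∨ a = -x := by
          rcases huv with ⟨rfl, rfl⟩ | ⟨rfl, rfl⟩
          · right; rw [← hd]; ring
          · left; rw [← hd]; ring
        rcases this with rfl | rfl
        · rfl
        · exact absurd hmem (by simpa using hnegA x hx)
      · have hna : -a ∈ A := (hflipneg a ha).mpr hmem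
        refine ⟨s(-a, 2 * -a), ⟨⟨-a, hna, rfl⟩, -a, 2 * -a, rfl, by ring⟩, ?_⟩
        rintro z ⟨⟨x, hx, rfl⟩, u, v, huv, hd⟩
        rw [Sym2.eq_iff] at huv
        have : a = x ∨ a = -x := by
          rcases huv with ⟨rfl, rfl⟩ | ⟨rfl, rfl⟩
          · right; rw [← hd]; ring
          · left; rw [← hd]; ring
        rcases this with rfl | hax
        · exact absurd hx hmem
        · rw [show x = -a by rw [hax]; ring]
  refine ⟨⟨hstarter, ?_, ?_⟩, hstarter, ?_⟩
  · rintro z ⟨x, hx, rfl⟩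
    rw [pairSum_mk]
    intro h
    have : (3 : ZMod p) * x = 0 := by rw [← h]; ring
    rcases mul_eq_zero.mp this with h | h
    exacts [h3ne h, hAne x hx h]
  · rintro z ⟨x, hx, rfl⟩ w ⟨y, hy, rfl⟩ hsum
    rw [pairSum_mk, pairSum_mk] at hsum
    have : (3 : ZMod p) * x = 3 * y := by ring_nf; ring_nf at hsum; linear_combination hsum
    have hxy : x = y := by
      have := mul_left_cancel₀ h3ne this
      exact this
    rw [hxy]
  · intro i hi1 hi2
    have hplt : 2 * i ≤ p - 1 := by
      have : (p-1) % 2 = 0 := by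
        rcases hodd with ⟨m, hm⟩; omega
      omega
    have hilt : i < p := by omega
    have hvi : ((i : ZMod p)).val = i := by
      rw [ZMod.val_natCast, Nat.mod_eq_of_lt hilt]
    have hv2i : ((2 * i : ℕ) : ZMod p).val = 2 * i := by
      rw [ZMod.val_natCast, Nat.mod_eq_of_lt (by omega)]
    have hine : (i : ZMod p) ≠ 0 := by
      intro h
      have := (ZMod.natCast_eq_zero_iff i p).mp h
      have := Nat.le_of_dvd (by omega) this
      omega
    by_cases hmem : (i : ZMod p) ∈ A
    · refine ⟨s((i:ZMod p), 2 * i), ⟨i, hmem, rfl⟩, (i:ZMod p), 2 * i, rfl, ?_, by ring⟩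
      have : (2 * (i : ZMod p)) = ((2 * i : ℕ) : ZMod p) := by push_cast; ring
      rw [this, hvi, hv2i]; omega
    · have hna : -(i:ZMod p) ∈ A := (hflipneg _ hine).mpr hmem
      refine ⟨s(-(i:ZMod p), 2 * -(i:ZMod p)), ⟨-(i:ZMod p), hna, rfl⟩,
        2 * -(i:ZMod p), -(i:ZMod p), Sym2.eq_swap, ?_, by ring⟩
      have hv1 : (-(i:ZMod p)).val = p - i := by
        rw [ZMod.neg_val, if_neg hine, hvi]
      have hv2 : (2 * -(i:ZMod p)).val = p - 2 * i := by
        have : (2 * -(i:ZMod p)) = -((2 * i : ℕ) : ZMod p) := by push_cast; ring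
        rw [this, ZMod.neg_val, if_neg, hv2i]
        intro h
        have := (ZMod.natCast_eq_zero_iff (2*i) p).mp h
        have := Nat.le_of_dvd (by omega) this
        omega
      rw [hv1, hv2]; omega


/-- Theorem 2.3: let `p = 2^k·t + 1` be an odd prime with `k ≥ 3`, `t > 1` odd,
`r` a primitive root mod `p`, and `B = ⋃_{j=0}^{2^{k-1}-1} C_j^p`. If `2 ∈ C_{2^{k-1}}^p`,
then `T_2 = {{x, 2x} : x ∈ B}` and `T_{2⁻¹} = {{x, 2⁻¹x} : x ∈ B}` are strong Skolem
starters for `ℤ_p`. -/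
theorem strong_skolem_starter_cyclotomic (p k t : ℕ) (hk : 3 ≤ k) (ht : Odd t)
    (ht1 : 1 < t) (hp : p.Prime) (hpeq : p = 2 ^ k * t + 1)
    (r : ℤ) (hr : IsPrimitiveRoot (r : ZMod p) (p - 1))
    (h2 : (2 : ZMod p) ∈ cycClass p r (2 ^ k) (2 ^ (k - 1))) :
    IsStrongSkolemStarter p
      {z | ∃ x : ZMod p, (∃ j < 2 ^ (k - 1), x ∈ cycClass p r (2 ^ k) j) ∧
        z = s(x, 2 * x)} ∧
    IsStrongSkolemStarter p
      {z | ∃ x : ZMod p, (∃ j < 2 ^ (k - 1), x ∈ cycClass p r (2 ^ k) j) ∧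
        z = s(x, (2 : ZMod p)⁻¹ * x)} := by
  haveI hpF : Fact p.Prime := ⟨hp⟩
  set ζ : ZMod p := (r : ZMod p) with hζ
  -- numerics
  have h8 : 8 ≤ 2 ^ k := by
    calc (8 : ℕ) = 2 ^ 3 := by norm_num
    _ ≤ 2 ^ k := Nat.pow_le_pow_right (by norm_num) hk
  have h24 : 24 ≤ 2 ^ k * t := by
    have h3t : 3 ≤ t := by obtain ⟨w, hw⟩ := ht; omega
    calc (24 : ℕ) = 8 * 3 := by norm_num
    _ ≤ 2 ^ k * t := Nat.mul_le_mul h8 h3t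
  have hp5 : 5 ≤ p := by rw [hpeq]; exact le_trans (by norm_num) (Nat.succ_le_succ h24)
  have hp1 : p - 1 = 2 ^ k * t := by rw [hpeq, Nat.add_sub_cancel]
  have hk1 : k - 1 + 1 = k := by omega
  have hEH : 2 ^ k = 2 * 2 ^ (k - 1) := by
    calc 2 ^ k = 2 ^ (k - 1 + 1) := by rw [hk1]
    _ = 2 * 2 ^ (k - 1) := by rw [pow_succ]; ring
  have hHltE : 2 ^ (k - 1) < 2 ^ k := Nat.pow_lt_pow_right (by norm_num) (by omega)
  have hHpos : 0 < 2 ^ (k - 1) := Nat.pow_pos (by norm_num)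
  have h2ne : (2 : ZMod p) ≠ 0 := by
    have := (ZMod.natCast_eq_zero_iff 2 p).not.mpr
      (fun h => by have := Nat.le_of_dvd (by norm_num) h; omega)
    simpa using this
  -- zeta is nonzero
  have hp1ne : p - 1 ≠ 0 := by omega
  have hζne : ζ ≠ 0 := by
    intro h
    have h1 : (1 : ZMod p) = 0 := by
      rw [← hr.pow_eq_one, h, zero_pow hp1ne]
    exact one_ne_zero h1
  -- the unit corresponding to zeta
  set u : (ZMod p)ˣ := (hζne.isUnit).unit with hu
  have huc : (u : ZMod p) = ζ := IsUnit.unit_spec _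
  have hordζ : orderOf ζ = p - 1 := hr.eq_orderOf.symm
  have hordu : orderOf u = p - 1 := by
    rw [← hordζ, ← huc, orderOf_units]
  -- surjectivity: every nonzero element is a power of zeta
  have hsurj : ∀ x : ZMod p, x ≠ 0 → ∃ m : ℕ, x = ζ ^ m := by
    intro x hx
    obtain ⟨v, hv⟩ := hx.isUnit
    have htop : Subgroup.zpowers u = ⊤ := by
      apply Subgroup.eq_top_of_card_eq
      rw [Nat.card_zpowers, hordu, Nat.card_eq_fintype_card, ZMod.card_units]
    have hvmem : v ∈ Subgroup.zpowers u := by rw [htop]; trivial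
    rw [← mem_powers_iff_mem_zpowers] at hvmem
    obtain ⟨m, hm⟩ := hvmem
    refine ⟨m, ?_⟩
    rw [← hv, ← hm, Units.val_pow_eq_pow_val, huc]
  -- well-definedness of the exponent mod 2^k
  have hWD : ∀ m m' : ℕ, ζ ^ m = ζ ^ m' → m % 2 ^ k = m' % 2 ^ k := by
    intro m m' h
    have hu' : u ^ m = u ^ m' := by
      apply Units.ext
      rw [Units.val_pow_eq_pow_val, Units.val_pow_eq_pow_val, huc]; exact h
    have := pow_eq_pow_iff_modEq.mp hu'
    rw [hordu] at this
    exact Nat.ModEq.of_dvd ⟨t, hp1⟩ this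
  -- the predicate Q
  set Q : ZMod p → Prop := fun x => ∃ m : ℕ, x = ζ ^ m ∧ m % 2 ^ k < 2 ^ (k - 1) with hQ
  have hQne : ∀ x : ZMod p, Q x → x ≠ 0 := by
    rintro x ⟨m, rfl, -⟩
    exact pow_ne_zero m hζne
  -- characterization of membership in B
  have hchar : ∀ x : ZMod p,
      (∃ j < 2 ^ (k - 1), x ∈ cycClass p r (2 ^ k) j) ↔ Q x := by
    intro x
    constructor
    · rintro ⟨j, hj, e, he⟩
      refine ⟨j + 2 ^ k * e, ?_, ?_⟩
      · rw [he, ← pow_mul, ← pow_add]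
      · rw [Nat.add_mul_mod_self_left, Nat.mod_eq_of_lt (lt_trans hj hHltE)]
        exact hj
    · rintro ⟨m, rfl, hm⟩
      refine ⟨m % 2 ^ k, hm, m / 2 ^ k, ?_⟩
      rw [← pow_mul, ← pow_add, Nat.mod_add_div]
  -- generic flip lemma
  have hflipgen : ∀ s : ℕ, s % 2 ^ k = 2 ^ (k - 1) → ∀ x : ZMod p, x ≠ 0 →
      (Q (ζ ^ s * x) ↔ ¬ Q x) := by
    intro s hs x hx
    obtain ⟨m, rfl⟩ := hsurj x hx
    have hQx : Q (ζ ^ m) ↔ m % 2 ^ k < 2 ^ (k - 1) := by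
      constructor
      · rintro ⟨m', hm', hlt⟩
        rw [hWD m m' hm']; exact hlt
      · intro h; exact ⟨m, rfl, h⟩
    have hQsx : Q (ζ ^ s * ζ ^ m) ↔ (s + m) % 2 ^ k < 2 ^ (k - 1) := by
      rw [← pow_add]
      constructor
      · rintro ⟨m', hm', hlt⟩
        rw [hWD (s + m) m' hm']; exact hlt
      · intro h; exact ⟨s + m, rfl, h⟩
    rw [hQx, hQsx]
    -- arithmetic
    have ha : m % 2 ^ k < 2 ^ k := Nat.mod_lt _ (by positivity)
    rw [Nat.add_mod, hs]
    rcases lt_or_ge (m % 2 ^ k) (2 ^ (k - 1)) with h | h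
    · rw [Nat.mod_eq_of_lt (by omega)]
      omega
    · have heq : 2 ^ (k - 1) + m % 2 ^ k = 2 ^ k + (m % 2 ^ k - 2 ^ (k - 1)) := by omega
      rw [heq, Nat.add_mod_left, Nat.mod_eq_of_lt (by omega)]
      omega
  -- exponent for 2
  obtain ⟨e₂, he₂⟩ := h2
  have h2pow : (2 : ZMod p) = ζ ^ (2 ^ (k - 1) + 2 ^ k * e₂) := by
    rw [he₂, ← pow_mul, ← pow_add]
  have hs₂ : (2 ^ (k - 1) + 2 ^ k * e₂) % 2 ^ k = 2 ^ (k - 1) := by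
    rw [Nat.add_mul_mod_self_left, Nat.mod_eq_of_lt hHltE]
  -- exponent for -1
  have hnegpow : (-1 : ZMod p) = ζ ^ (2 ^ (k - 1) * t) := by
    have hsq : ζ ^ (2 ^ (k - 1) * t) * ζ ^ (2 ^ (k - 1) * t) = 1 := by
      rw [← pow_add]
      have : 2 ^ (k - 1) * t + 2 ^ (k - 1) * t = p - 1 := by
        rw [hp1, hEH]; ring
      rw [this, hr.pow_eq_one]
    have hne1 : ζ ^ (2 ^ (k - 1) * t) ≠ 1 := by
      intro h
      have hdvd := (hr.pow_eq_one_iff_dvd _).mp h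
      have hpos : 0 < 2 ^ (k - 1) * t := Nat.mul_pos hHpos (by omega)
      have hle := Nat.le_of_dvd hpos hdvd
      rw [hp1, hEH] at hle
      nlinarith [hHpos]
    rcases mul_self_eq_one_iff.mp hsq with h | h
    · exact absurd h hne1
    · exact h.symm
  have hsneg : (2 ^ (k - 1) * t) % 2 ^ k = 2 ^ (k - 1) := by
    obtain ⟨w, hw⟩ := ht
    have : 2 ^ (k - 1) * t = 2 ^ k * w + 2 ^ (k - 1) := by
      rw [hw, hEH]; ring
    rw [this, Nat.mul_add_mod, Nat.mod_eq_of_lt hHltE]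
  -- the three concrete flips
  have hflip2 : ∀ x : ZMod p, x ≠ 0 → (Q (2 * x) ↔ ¬ Q x) := by
    intro x hx
    rw [h2pow]
    exact hflipgen _ hs₂ x hx
  have hflipneg : ∀ x : ZMod p, x ≠ 0 → (Q (-x) ↔ ¬ Q x) := by
    intro x hx
    have : -x = ζ ^ (2 ^ (k - 1) * t) * x := by rw [← hnegpow]; ring
    rw [this]
    exact hflipgen _ hsneg x hx
  have hflipinv : ∀ x : ZMod p, x ≠ 0 → (Q ((2 : ZMod p)⁻¹ * x) ↔ ¬ Q x) := by
    intro x hx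
    have hix : (2 : ZMod p)⁻¹ * x ≠ 0 := mul_ne_zero (inv_ne_zero h2ne) hx
    have h22 : (2 : ZMod p) * ((2 : ZMod p)⁻¹ * x) = x := by field_simp
    have h1 := hflip2 _ hix
    rw [h22] at h1
    exact ⟨fun h hx' => h1.mp hx' h, fun h => by by_contra h'; exact h (h1.mpr h')⟩
  -- the two half-sets
  set A₁ : Set (ZMod p) := {x | Q x} with hA₁
  set A₂ : Set (ZMod p) := {x | x ≠ 0 ∧ ¬ Q x} with hA₂
  constructor
  · have hseteq : {z | ∃ x : ZMod p, (∃ j < 2 ^ (k - 1), x ∈ cycClass p r (2 ^ k) j) ∧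
        z = s(x, 2 * x)} = {z | ∃ x ∈ A₁, z = s(x, 2 * x)} := by
      ext z
      simp only [Set.mem_setOf_eq, hchar, hA₁]
    rw [hseteq]
    refine main_starter p hp5 A₁ (fun h => hQne 0 h rfl) ?_ ?_
    · intro x hx
      simpa only [hA₁, Set.mem_setOf_eq] using hflip2 x hx
    · intro x hx
      simpa only [hA₁, Set.mem_setOf_eq] using hflipneg x hx
  · have hseteq : {z | ∃ x : ZMod p, (∃ j < 2 ^ (k - 1), x ∈ cycClass p r (2 ^ k) j) ∧
        z = s(x, (2 : ZMod p)⁻¹ * x)} = {z | ∃ y ∈ A₂, z = s(y, 2 * y)} := by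
      ext z
      simp only [Set.mem_setOf_eq, hchar, hA₂]
      constructor
      · rintro ⟨x, hQx, rfl⟩
        have hx0 := hQne x hQx
        have hix : (2 : ZMod p)⁻¹ * x ≠ 0 := mul_ne_zero (inv_ne_zero h2ne) hx0
        have h22 : (2 : ZMod p) * ((2 : ZMod p)⁻¹ * x) = x := by field_simp
        refine ⟨(2 : ZMod p)⁻¹ * x, ⟨hix, fun h => (hflipinv x hx0).mp h hQx⟩, ?_⟩
        rw [h22]
        exact Sym2.eq_swap
      · rintro ⟨y, ⟨hy0, hnQ⟩, rfl⟩
        have hQ2y : Q (2 * y) := (hflip2 y hy0).mpr hnQ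
        refine ⟨2 * y, hQ2y, ?_⟩
        have h22 : (2 : ZMod p)⁻¹ * (2 * y) = y := by field_simp
        rw [h22]
        exact Sym2.eq_swap
    rw [hseteq]
    refine main_starter p hp5 A₂ (fun h => h.1 rfl) ?_ ?_
    · intro x hx
      have h1 := hflip2 x hx
      have h2x : (2 : ZMod p) * x ≠ 0 := mul_ne_zero h2ne hx
      simp only [hA₂, Set.mem_setOf_eq]
      constructor
      · rintro ⟨-, hn⟩ hc
        exact hn (h1.mpr hc.2)
      · intro hn
        have hQx : Q x := by by_contra hq; exact hn ⟨hx, hq⟩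
        exact ⟨h2x, fun hq2 => (h1.mp hq2) hQx⟩
    · intro x hx
      have h1 := hflipneg x hx
      have hnx : -x ≠ 0 := neg_ne_zero.mpr hx
      simp only [hA₂, Set.mem_setOf_eq]
      constructor
      · rintro ⟨-, hn⟩ hc
        exact hn (h1.mpr hc.2)
      · intro hn
        have hQx : Q x := by by_contra hq; exact hn ⟨hx, hq⟩
        exact ⟨hnx, fun hq2 => (h1.mp hq2) hQx⟩
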